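/- Let m be a lawful monad with a polymorphic zero element err, i.e. a family err : ∀ α, m α such that (err β >>= k) = err γ for all k : β → m γ, and (n >>= fun _ => err γ) = err γ for all n : m β. Let f : A → Option B and g : B → Option A be partial inverses: for all a and b, f a = some b ↔ g b = some a. Define a bx over m with state A × B between A and B by getL := gets Prod.fst, getR := gets Prod.snd, setL a' := match f a' with | some b' => set (a', b') | none => monadLift (err PUnit), and setR b' := match g b' with | some a' => set (a', b') | none => monadLift (err PUnit). Then: (i) (S_LG_L) (do setL a'; getL) = (do setL a'; pure a') and (S_RG_R) (do setR b'; getR) = (do setR b'; pure b') hold for all a' : A and b' : B; and (ii) on every consistent state, i.e. every (a, b) : A × B with f a = some b, the get–set laws hold pointwise: ((do let x ← getL; setL x) (a, b) : m (PUnit × (A × B))) = pure (⟨⟩, (a, b)) and ((do let y ← getR; setR y) (a, b) : m (PUnit × (A × B))) = pure (⟨⟩, (a, b)). -/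

import Mathlib

/-!
When a setter fails it lifts the zero `err`, which absorbs every continuation, so both sides of a
set–get law collapse to the same error; when it succeeds it is a plain `set`, after which `gets`
reads back what was written. On a consistent state `(a, b)` the partial-inverse condition makes
both setters succeed on the current component and rewrite the very same state.
-/

universe u v

def getsS {m : Type u → Type v} [Monad m] {σ α : Type u} (f : σ → α) : StateT σ m α := do
  let s ← get
  pure (f s)

/-- The left set operation of the partial bx. -/
def pSetL {m : Type u → Type v} [Monad m] {A B : Type u}
    (err : ∀ α : Type u, m α) (f : A → Option B) (a' : A) : StateT (A × B) m PUnit :=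
  match f a' with
  | some b' => set (a', b')
  | none => monadLift (err PUnit)

/-- The right set operation of the partial bx. -/
def pSetR {m : Type u → Type v} [Monad m] {A B : Type u}
    (err : ∀ α : Type u, m α) (g : B → Option A) (b' : B) : StateT (A × B) m PUnit :=
  match g b' with
  | some a' => set (a', b')
  | none => monadLift (err PUnit)

namespace StateT

variable {m : Type u → Type v} [Monad m] {σ α β : Type u}

theorem run_getsS_bind [LawfulMonad m] (h : σ → α) (k : α → StateT σ m β) (s : σ) :
    (getsS h >>= k).run s = (k (h s)).run s := by
  simp [getsS]

theorem set_bind_getsS [LawfulMonad m] (s : σ) (h : σ → α) :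
    (set s >>= fun _ => getsS h : StateT σ m α) = set s >>= fun _ => pure (h s) := by
  ext t
  simp [getsS]

theorem monadLift_err_bind [LawfulMonad m] (err : ∀ α : Type u, m α)
    (herr : ∀ {β γ : Type u} (k : β → m γ), err β >>= k = err γ) (k : β → StateT σ m α) :
    (monadLift (err β) >>= k : StateT σ m α) = monadLift (err α) := by
  ext s
  simp only [run_bind, run_monadLift, monadLift_self, herr]

end StateT

section PartialBx

open StateT

variable {m : Type u → Type v} [Monad m] [LawfulMonad m] {A B : Type u} (err : ∀ α : Type u, m α)

theorem pSetL_bind_getsS_fst (herr : ∀ {β γ : Type u} (k : β → m γ), err β >>= k = err γ)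
    (f : A → Option B) (a' : A) :
    (pSetL err f a' >>= fun _ => getsS Prod.fst) = (pSetL err f a' >>= fun _ => pure a') := by
  unfold pSetL
  cases f a' with
  | some b' => exact set_bind_getsS (a', b') Prod.fst
  | none => rw [monadLift_err_bind err herr, monadLift_err_bind err herr]

theorem pSetR_bind_getsS_snd (herr : ∀ {β γ : Type u} (k : β → m γ), err β >>= k = err γ)
    (g : B → Option A) (b' : B) :
    (pSetR err g b' >>= fun _ => getsS Prod.snd) = (pSetR err g b' >>= fun _ => pure b') := by
  unfold pSetR
  cases g b' with
  | some a' => exact set_bind_getsS (a', b') Prod.snd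
  | none => rw [monadLift_err_bind err herr, monadLift_err_bind err herr]

theorem run_getsS_fst_bind_pSetL {f : A → Option B} {a : A} {b : B} (hab : f a = some b) :
    (getsS (Prod.fst : A × B → A) >>= pSetL err f).run (a, b) = pure (⟨⟩, (a, b)) := by
  rw [run_getsS_bind]
  simp [pSetL, hab]

theorem run_getsS_snd_bind_pSetR {g : B → Option A} {a : A} {b : B} (hba : g b = some a) :
    (getsS (Prod.snd : A × B → B) >>= pSetR err g).run (a, b) = pure (⟨⟩, (a, b)) := by
  rw [run_getsS_bind]
  simp [pSetR, hba]

end PartialBx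

theorem partial_bx_wellBehaved
    {m : Type u → Type v} [Monad m] [LawfulMonad m] {A B : Type u}
    (err : ∀ α : Type u, m α)
    (herr₁ : ∀ {β γ : Type u} (k : β → m γ), err β >>= k = err γ)
    (f : A → Option B) (g : B → Option A)
    (hfg : ∀ (a : A) (b : B), f a = some b ↔ g b = some a) :
    (∀ a' : A,
      (do pSetL err f a'; getsS (m := m) (Prod.fst : A × B → A)) =
      (do pSetL err f a'; pure a')) ∧
    (∀ b' : B,
      (do pSetR err g b'; getsS (m := m) (Prod.snd : A × B → B)) =
      (do pSetR err g b'; pure b')) ∧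
    (∀ (a : A) (b : B), f a = some b →
      (((do let x ← getsS (m := m) (Prod.fst : A × B → A)
            pSetL err f x) : StateT (A × B) m PUnit).run (a, b) =
         pure (PUnit.unit, (a, b))) ∧
      (((do let y ← getsS (m := m) (Prod.snd : A × B → B)
            pSetR err g y) : StateT (A × B) m PUnit).run (a, b) =
         pure (PUnit.unit, (a, b)))) :=
  ⟨pSetL_bind_getsS_fst err herr₁ f, pSetR_bind_getsS_snd err herr₁ g, fun a b hab =>
    ⟨run_getsS_fst_bind_pSetL err hab, run_getsS_snd_bind_pSetR err ((hfg a b).mp hab)⟩⟩
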